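/- In the setting where $X_3, X_4$ are unit vectors with $X_3^TX_4 = -\hat\theta$, $\hat\psi^2 = 1-\hat\theta$, $X_1 = C(X_3+X_4)/2 + V$, $X_2 = C(X_3+X_4)/2 - V$, $V \perp X_3, X_4$, $C > 1$, $C^2\hat\psi^2/2 < 1$, $\hat\varphi^2 = C^2\hat\psi^2$: for $\beta^0$ supported on $\{1,2\}$ with $\beta_1^0 \ge \beta_2^0 \ge \lambda/\hat\varphi^2$, the vector $\beta^* = (\beta_1^0 - \lambda/\hat\varphi^2, \beta_2^0 - \lambda/\hat\varphi^2, 0, 0)$ satisfies the KKT conditions for the noiseless Lasso (with $|z_3^*| = |z_4^*| = 1/C < 1$), so $\|X(\beta^*-\beta^0)\|_2^2 = 2\lambda^2/\hat\varphi^2$ and $\beta^*_3 = \beta^*_4 = 0$ (no false positives). -/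

import Mathlib

/-!
The Lasso objective is convex, so the KKT conditions certify a minimiser. For
`β* = β⁰ - d (1, 1, 0, 0)` with `d = λ / (C² ψ²)` the residual is
`X (β* - β⁰) = -d (X₁ + X₂) = -d C (X₃ + X₄)`, whose inner products with `X₁, X₂` are `-λ` and
with `X₃, X₄` are `-λ / C`. Hence `z = (1, 1, 1/C, 1/C)` is the required subgradient of `‖·‖₁`
at `β*`, because `C > 1`, and the prediction error is `d² C² ‖X₃ + X₄‖² = 2 λ² / (C² ψ²)`.
-/

open scoped RealInnerProductSpace

section Lasso

variable {ι E : Type*} [Fintype ι] [NormedAddCommGroup E] [InnerProductSpace ℝ E]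

def lassoObjective (X : ι → E) (β₀ : ι → ℝ) (lam : ℝ) (b : ι → ℝ) : ℝ :=
  ‖∑ j, (b j - β₀ j) • X j‖ ^ 2 + 2 * lam * ∑ j, |b j|

def IsL1Subgradient (z β : ι → ℝ) : Prop :=
  ∀ i, |z i| ≤ 1 ∧ z i * β i = |β i|

/-- Writing `X (b - β₀) = r + δ` with `r = X (β - β₀)`, the stationarity condition turns the
cross term `2 ⟪r, δ⟫` into `2 λ ∑ z_j (β_j - b_j) ≥ 2 λ (‖β‖₁ - ‖b‖₁)`. -/
theorem lassoObjective_le_of_kkt (X : ι → E) (β₀ β z : ι → ℝ) {lam : ℝ} (hlam : 0 ≤ lam)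
    (hgrad : ∀ i, ⟪X i, ∑ j, (β j - β₀ j) • X j⟫ = -(lam * z i)) (hz : IsL1Subgradient z β)
    (b : ι → ℝ) : lassoObjective X β₀ lam β ≤ lassoObjective X β₀ lam b := by
  set r := ∑ j, (β j - β₀ j) • X j
  set δ := ∑ j, (b j - β j) • X j
  have hsplit : ∑ j, (b j - β₀ j) • X j = r + δ := by
    simp only [r, δ, ← Finset.sum_add_distrib, ← add_smul]
    congr! 2; ring
  have hcross : ⟪r, δ⟫ = -(lam * ∑ j, z j * b j) + lam * ∑ j, |β j| := by
    have hgrad' : ∀ i, ⟪r, X i⟫ = -(lam * z i) := fun i => by rw [real_inner_comm, hgrad]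
    simp only [δ, inner_sum, real_inner_smul_right, hgrad']
    rw [← Finset.sum_congr rfl fun i _ => (hz i).2, Finset.mul_sum, Finset.mul_sum,
      ← Finset.sum_neg_distrib, ← Finset.sum_add_distrib]
    congr! 1 with i; ring
  have hzb : ∑ j, z j * b j ≤ ∑ j, |b j| := Finset.sum_le_sum fun i _ =>
    calc z i * b i ≤ |z i * b i| := le_abs_self _
      _ = |z i| * |b i| := abs_mul _ _
      _ ≤ |b i| := mul_le_of_le_one_left (abs_nonneg _) (hz i).1
  unfold lassoObjective
  rw [hsplit, norm_add_sq_real, hcross]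
  nlinarith [sq_nonneg ‖δ‖, mul_le_mul_of_nonneg_left hzb hlam]

end Lasso

theorem isL1Subgradient_one_one {a b c : ℝ} (ha : 0 ≤ a) (hb : 0 ≤ b) (hc : |c| ≤ 1) :
    IsL1Subgradient ![1, 1, c, c] ![a, b, 0, 0] := by
  intro i
  fin_cases i <;> simp [abs_of_nonneg, ha, hb, hc]

section Design

variable {E : Type*} [NormedAddCommGroup E] [InnerProductSpace ℝ E]

theorem real_inner_add_right_of_norm_eq_one {x y : E} {θ : ℝ} (hx : ‖x‖ = 1)
    (hxy : ⟪x, y⟫ = -θ) : ⟪x, x + y⟫ = 1 - θ := by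
  rw [inner_add_right, real_inner_self_eq_norm_sq, hx, hxy]; ring

theorem real_inner_add_right_of_norm_eq_one' {x y : E} {θ : ℝ} (hy : ‖y‖ = 1)
    (hxy : ⟪x, y⟫ = -θ) : ⟪y, x + y⟫ = 1 - θ := by
  rw [add_comm]; exact real_inner_add_right_of_norm_eq_one hy (by rwa [real_inner_comm])

theorem norm_add_sq_of_norm_eq_one {x y : E} {θ : ℝ} (hx : ‖x‖ = 1) (hy : ‖y‖ = 1)
    (hxy : ⟪x, y⟫ = -θ) : ‖x + y‖ ^ 2 = 2 * (1 - θ) := by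
  rw [← real_inner_self_eq_norm_sq, inner_add_left, real_inner_add_right_of_norm_eq_one hx hxy,
    real_inner_add_right_of_norm_eq_one' hy hxy]
  ring

theorem real_inner_design_add {X1 X3 X4 V : E} {θ C s : ℝ} (h3 : ‖X3‖ = 1) (h4 : ‖X4‖ = 1)
    (hθ : ⟪X3, X4⟫ = -θ) (hX1 : X1 = (C / 2) • (X3 + X4) + s • V) (hV3 : ⟪V, X3⟫ = 0)
    (hV4 : ⟪V, X4⟫ = 0) : ⟪X1, X3 + X4⟫ = C * (1 - θ) := by
  rw [hX1, inner_add_left, real_inner_smul_left, real_inner_smul_left, real_inner_self_eq_norm_sq,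
    norm_add_sq_of_norm_eq_one h3 h4 hθ, inner_add_right, hV3, hV4]
  ring

theorem real_inner_design_residual {X1 X2 X3 X4 V : E} {θ C : ℝ} (h3 : ‖X3‖ = 1)
    (h4 : ‖X4‖ = 1) (hθ : ⟪X3, X4⟫ = -θ) (hX1 : X1 = (C / 2) • (X3 + X4) + V)
    (hX2 : X2 = (C / 2) • (X3 + X4) - V) (hV3 : ⟪V, X3⟫ = 0) (hV4 : ⟪V, X4⟫ = 0) (hC : C ≠ 0)
    (d : ℝ) (i : Fin 4) :
    ⟪![X1, X2, X3, X4] i, -(d * C) • (X3 + X4)⟫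
      = -(d * (C ^ 2 * (1 - θ)) * ![1, 1, C⁻¹, C⁻¹] i) := by
  rw [real_inner_smul_right]
  fin_cases i <;> dsimp
  · have hX1' : X1 = (C / 2) • (X3 + X4) + (1 : ℝ) • V := by rw [hX1, one_smul]
    rw [real_inner_design_add h3 h4 hθ hX1' hV3 hV4]; ring
  · have hX2' : X2 = (C / 2) • (X3 + X4) + (-1 : ℝ) • V := by rw [hX2, neg_one_smul, sub_eq_add_neg]
    rw [real_inner_design_add h3 h4 hθ hX2' hV3 hV4]; ring
  · rw [real_inner_add_right_of_norm_eq_one h3 hθ]; field_simp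
  · rw [real_inner_add_right_of_norm_eq_one' h4 hθ]; field_simp

end Design

theorem stmt18_general (n : ℕ) (X1 X2 X3 X4 V : EuclideanSpace ℝ (Fin n)) (θ C lam β10 β20 : ℝ)
    (h3 : ‖X3‖ = 1) (h4 : ‖X4‖ = 1) (hθ : ⟪X3, X4⟫ = -θ)
    (hψ0 : 0 < 1 - θ)
    (hX1 : X1 = (C / 2) • (X3 + X4) + V)
    (hX2 : X2 = (C / 2) • (X3 + X4) - V)
    (hV3 : ⟪V, X3⟫ = 0) (hV4 : ⟪V, X4⟫ = 0)
    (hC : 1 < C)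
    (hlam : 0 < lam)
    (hβ : β10 ≥ β20) (hβ2 : β20 ≥ lam / (C ^ 2 * (1 - θ))) :
    (∀ b1 b2 b3 b4 : ℝ,
      ‖((β10 - lam / (C ^ 2 * (1 - θ))) - β10) • X1
            + ((β20 - lam / (C ^ 2 * (1 - θ))) - β20) • X2
            + (0 : ℝ) • X3 + (0 : ℝ) • X4‖ ^ 2
          + 2 * lam * (|β10 - lam / (C ^ 2 * (1 - θ))|
            + |β20 - lam / (C ^ 2 * (1 - θ))| + |(0 : ℝ)| + |(0 : ℝ)|)
        ≤ ‖(b1 - β10) • X1 + (b2 - β20) • X2 + b3 • X3 + b4 • X4‖ ^ 2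
          + 2 * lam * (|b1| + |b2| + |b3| + |b4|)) ∧
    ‖((β10 - lam / (C ^ 2 * (1 - θ))) - β10) • X1
        + ((β20 - lam / (C ^ 2 * (1 - θ))) - β20) • X2
        + (0 : ℝ) • X3 + (0 : ℝ) • X4‖ ^ 2
      = 2 * lam ^ 2 / (C ^ 2 * (1 - θ)) := by
  set d := lam / (C ^ 2 * (1 - θ))
  have hC0 : C ≠ 0 := by positivity
  have hd : d * (C ^ 2 * (1 - θ)) = lam := div_mul_cancel₀ _ (by positivity)
  have hres : ((β10 - d) - β10) • X1 + ((β20 - d) - β20) • X2 + (0 : ℝ) • X3 + (0 : ℝ) • X4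
      = -(d * C) • (X3 + X4) := by
    rw [hX1, hX2]; module
  have hfin : ∑ j, (![β10 - d, β20 - d, 0, 0] j - ![β10, β20, 0, 0] j) • ![X1, X2, X3, X4] j
      = ((β10 - d) - β10) • X1 + ((β20 - d) - β20) • X2 + (0 : ℝ) • X3 + (0 : ℝ) • X4 := by
    simp [Fin.sum_univ_four]
  have hsub : IsL1Subgradient ![1, 1, C⁻¹, C⁻¹] ![β10 - d, β20 - d, 0, 0] :=
    isL1Subgradient_one_one (by linarith) (by linarith)
      (by rw [abs_inv, abs_of_pos (by linarith)]; exact inv_le_one_of_one_le₀ hC.le)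
  have hgrad (i : Fin 4) : ⟪![X1, X2, X3, X4] i,
      ∑ j, (![β10 - d, β20 - d, 0, 0] j - ![β10, β20, 0, 0] j) • ![X1, X2, X3, X4] j⟫
      = -(lam * ![1, 1, C⁻¹, C⁻¹] i) := by
    rw [hfin, hres, ← hd]; exact real_inner_design_residual h3 h4 hθ hX1 hX2 hV3 hV4 hC0 d i
  have hopt := lassoObjective_le_of_kkt _ _ _ _ hlam.le hgrad hsub
  refine ⟨fun b1 b2 b3 b4 => ?_, ?_⟩
  · simpa [lassoObjective, Fin.sum_univ_four] using hopt ![b1, b2, b3, b4]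
  · rw [hres, norm_smul, mul_pow, norm_add_sq_of_norm_eq_one h3 h4 hθ, Real.norm_eq_abs, sq_abs,
      ← hd]
    field_simp

/-- in the setting of Statement 17, the Lasso with β⁰ supported on {1,2}
has no false positives and prediction error 2λ²/φ̂². -/
theorem stmt18 (n : ℕ) (X1 X2 X3 X4 V : EuclideanSpace ℝ (Fin n)) (θ C lam β10 β20 : ℝ)
    (h3 : ‖X3‖ = 1) (h4 : ‖X4‖ = 1) (hθ : ⟪X3, X4⟫ = -θ)
    (hψ0 : 0 < 1 - θ) (hψ1 : 1 - θ < 1)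
    (hX1 : X1 = (C / 2) • (X3 + X4) + V)
    (hX2 : X2 = (C / 2) • (X3 + X4) - V)
    (hV3 : ⟪V, X3⟫ = 0) (hV4 : ⟪V, X4⟫ = 0)
    (hVnorm : ‖V‖ ^ 2 = 1 - C ^ 2 * (1 - θ) / 2)
    (hC : 1 < C) (hC2 : C ^ 2 * (1 - θ) / 2 < 1)
    (hlam : 0 < lam)
    (hβ : β10 ≥ β20) (hβ2 : β20 ≥ lam / (C ^ 2 * (1 - θ))) :
    (∀ b1 b2 b3 b4 : ℝ,
      ‖((β10 - lam / (C ^ 2 * (1 - θ))) - β10) • X1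
            + ((β20 - lam / (C ^ 2 * (1 - θ))) - β20) • X2
            + (0 : ℝ) • X3 + (0 : ℝ) • X4‖ ^ 2
          + 2 * lam * (|β10 - lam / (C ^ 2 * (1 - θ))|
            + |β20 - lam / (C ^ 2 * (1 - θ))| + |(0 : ℝ)| + |(0 : ℝ)|)
        ≤ ‖(b1 - β10) • X1 + (b2 - β20) • X2 + b3 • X3 + b4 • X4‖ ^ 2
          + 2 * lam * (|b1| + |b2| + |b3| + |b4|)) ∧
    ‖((β10 - lam / (C ^ 2 * (1 - θ))) - β10) • X1
        + ((β20 - lam / (C ^ 2 * (1 - θ))) - β20) • X2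
        + (0 : ℝ) • X3 + (0 : ℝ) • X4‖ ^ 2
      = 2 * lam ^ 2 / (C ^ 2 * (1 - θ)) :=
  stmt18_general n X1 X2 X3 X4 V θ C lam β10 β20 h3 h4 hθ hψ0 hX1 hX2 hV3 hV4 hC hlam hβ hβ2
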